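/- arXiv:1005.4753 — 2 statements merged into one kernel-verified Lean document; each statement's English description precedes it below -/
import Mathlib

section
/- For any fixed real s ≠ 0, the function f(c) = (2 − Φ(c−s) − Φ(c+s)) / (2(1 − Φ(c))) satisfies: (a) f(0) = 1; (b) f(c) → ∞ as c → ∞; (c) f is strictly increasing on [0,∞). -/
open MeasureTheory ProbabilityTheory Filter
open scoped ENNReal Classical

noncomputable section

/-- The standard normal cumulative distribution function `Φ`. -/
def Phi (x : ℝ) : ℝ :=
  ∫ t in Set.Iic x, (Real.sqrt (2 * Real.pi))⁻¹ * Real.exp (-(t ^ 2) / 2)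

/-- Type I error of the rule rejecting `H₀ᵢ : μᵢ = 0` when the sample mean
falls outside `(a, b)`. -/
def typeI (σ : ℝ) (n : ℕ) (a b : ℝ) : ℝ :=
  Phi (Real.sqrt n * a / σ) + 1 - Phi (Real.sqrt n * b / σ)

/-- Type II error of the rule rejecting when the sample mean falls outside `(a, b)`. -/
def typeII (σ : ℝ) (ν : Measure ℝ) (n : ℕ) (a b : ℝ) : ℝ :=
  ∫ μ, (Phi (Real.sqrt n * (b - μ) / σ) - Phi (Real.sqrt n * (a - μ) / σ)) ∂ν

/-- Bayes risk of a fixed-threshold rule: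
`R = m (1-p) t₁ δ₀ + m p t₂ δ_A`. -/
def fixedRisk (m : ℕ) (σ : ℝ) (ν : Measure ℝ) (n : ℕ) (p δ0 δA a b : ℝ) : ℝ :=
  (m : ℝ) * (1 - p) * typeI σ n a b * δ0 + (m : ℝ) * p * typeII σ ν n a b * δA

/-- The defining equation of a Bayes-oracle critical value:
`δ f = ∫ exp (n (x μ/σ² - μ²/(2σ²))) dν(μ)`. -/
def OracleEq (σ : ℝ) (ν : Measure ℝ) (n : ℕ) (fδ x : ℝ) : Prop :=
  fδ = ∫ μ, Real.exp ((n : ℝ) * (x * μ / σ ^ 2 - μ ^ 2 / (2 * σ ^ 2))) ∂ν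

/-- The sparsity ratio `f = (1 - p) / p`. -/
def fsp (p : ℝ) : ℝ := (1 - p) / p

/-- `a` and `b` are the Bayes-oracle critical values. -/
def IsOracle (σ : ℝ) (ν : Measure ℝ) (n : ℕ → ℕ) (p δ : ℕ → ℝ) (a b : ℕ → ℝ) : Prop :=
  ∀ m, a m < 0 ∧ 0 < b m ∧
    OracleEq σ ν (n m) (δ m * fsp (p m)) (a m) ∧
    OracleEq σ ν (n m) (δ m * fsp (p m)) (b m)

/-- Assumption (A): `n → ∞`, `δ f → c ∈ (0, ∞]` and `2 log (δ f) / n → C` with `0 ≤ C < ∞`. -/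
def AssumptionA (n : ℕ → ℕ) (p δ : ℕ → ℝ) (C : ℝ) : Prop :=
  Tendsto (fun m => (n m : ℝ)) atTop atTop ∧
    ((∃ c : ℝ, 0 < c ∧ Tendsto (fun m => δ m * fsp (p m)) atTop (nhds c)) ∨
      Tendsto (fun m => δ m * fsp (p m)) atTop atTop) ∧
    0 ≤ C ∧
    Tendsto (fun m => 2 * Real.log (δ m * fsp (p m)) / (n m : ℝ)) atTop (nhds C)

/-- Assumption (B): `n → ∞`, `p → 0`, `log δ = o(log p)` and `δ` bounded from above. -/
def AssumptionB (n : ℕ → ℕ) (p δ : ℕ → ℝ) : Prop :=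
  Tendsto (fun m => (n m : ℝ)) atTop atTop ∧
    Tendsto p atTop (nhds 0) ∧
    Tendsto (fun m => Real.log (δ m) / Real.log (p m)) atTop (nhds 0) ∧
    ∃ K : ℝ, ∀ m, δ m ≤ K

/-- The neighbourhoods `[-T-ε, -T+ε] ∪ [T-ε, T+ε]` of `±T` where `T = σ √C`. -/
def densitySupport (σ C ε : ℝ) : Set ℝ :=
  Set.Icc (-(σ * Real.sqrt C) - ε) (-(σ * Real.sqrt C) + ε) ∪
    Set.Icc (σ * Real.sqrt C - ε) (σ * Real.sqrt C + ε)

/-- Assumption (C): `ν` has a positive bounded Lebesgue density `ρ` on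
`[-T-ε, -T+ε] ∪ [T-ε, T+ε]`, where `T = σ √C`. -/
def AssumptionC (ν : Measure ℝ) (σ C : ℝ) (ρ : ℝ → ℝ) : Prop :=
  ∃ ε : ℝ, 0 < ε ∧
    (∀ x ∈ densitySupport σ C ε, 0 < ρ x) ∧
    (∃ K : ℝ, ∀ x ∈ densitySupport σ C ε, ρ x ≤ K) ∧
    ∀ s : Set ℝ, MeasurableSet s → s ⊆ densitySupport σ C ε →
      ν s = ENNReal.ofReal (∫ x in s, ρ x)

/-- The one-sided limits `ρ(0⁻) = ρm` and `ρ(0⁺) = ρp` exist and are finite and positive. -/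
def RhoLimits (ρ : ℝ → ℝ) (ρm ρp : ℝ) : Prop :=
  0 < ρm ∧ 0 < ρp ∧
    Tendsto ρ (nhdsWithin 0 (Set.Iio 0)) (nhds ρm) ∧
    Tendsto ρ (nhdsWithin 0 (Set.Ioi 0)) (nhds ρp)

/-- `v = n δ² f²`. -/
def vseq (n : ℕ → ℕ) (p δ : ℕ → ℝ) (m : ℕ) : ℝ :=
  (n m : ℝ) * δ m ^ 2 * fsp (p m) ^ 2

/-- A multiple testing rule with risks `R` is asymptotically Bayes optimal under
sparsity relative to the Bayes-oracle risks `RB` if `R/RB → 1`. -/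
def ABOS (R RB : ℕ → ℝ) : Prop :=
  Tendsto (fun m => R m / RB m) atTop (nhds 1)

/-- The risk of the Bayes oracle, with `δ₀ = δ δ_A`. -/
def oracleRisk (σ : ℝ) (ν : Measure ℝ) (n : ℕ → ℕ) (p δ δA : ℕ → ℝ)
    (a b : ℕ → ℝ) (m : ℕ) : ℝ :=
  fixedRisk m σ ν (n m) (p m) (δ m * δA m) (δA m) (a m) (b m)

/-- A sequence tends to `s ∈ (0, ∞]`. -/
def TendstoPosOrTop (g : ℕ → ℝ) : Prop :=
  (∃ s : ℝ, 0 < s ∧ Tendsto g atTop (nhds s)) ∨ Tendsto g atTop atTop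

/-- The defining equation of the symmetric BFDR level-`α` threshold `c`. -/
def BFDREq (σ : ℝ) (ν : Measure ℝ) (n : ℕ) (f α c : ℝ) : Prop :=
  α / (f * (1 - α)) =
    2 * (1 - Phi c) /
      (2 - ∫ μ, (Phi (c + Real.sqrt n * μ / σ) + Phi (c - Real.sqrt n * μ / σ)) ∂ν)

/-- The conditions on `α` of Theorem `TH_BFDR`: `α ∈ (0, 1-p)`, `α → α_∞ < 1`,
`f/α → ∞`, `log(f/α)/n → C₀ < ∞` with `ν(-σ√(2C₀), σ√(2C₀)) < 1` and
no `ν`-atoms at `±σ√(2C₀)`. -/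
def BFDRalphaConditions (σ : ℝ) (ν : Measure ℝ) (n : ℕ → ℕ) (p α : ℕ → ℝ)
    (αinf C0 : ℝ) : Prop :=
  (∀ m, 0 < α m ∧ α m < 1 - p m) ∧
    αinf < 1 ∧ Tendsto α atTop (nhds αinf) ∧
    Tendsto (fun m => fsp (p m) / α m) atTop atTop ∧
    Tendsto (fun m => Real.log (fsp (p m) / α m) / (n m : ℝ)) atTop (nhds C0) ∧
    ν (Set.Ioo (-(σ * Real.sqrt (2 * C0))) (σ * Real.sqrt (2 * C0))) < 1 ∧
    ν {σ * Real.sqrt (2 * C0)} = 0 ∧ ν {-(σ * Real.sqrt (2 * C0))} = 0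

/-- The conditions under which the BFDR rule is ABOS:
`log(fδ√n)/log(f/α) → 1` and `2 log(αδ√n) - log log (f/α) → -∞`. -/
def BFDRoptConditions (n : ℕ → ℕ) (p δ α : ℕ → ℝ) : Prop :=
  Tendsto (fun m => Real.log (fsp (p m) * δ m * Real.sqrt (n m)) /
      Real.log (fsp (p m) / α m)) atTop (nhds 1) ∧
    Tendsto (fun m => 2 * Real.log (α m * δ m * Real.sqrt (n m)) -
      Real.log (Real.log (fsp (p m) / α m))) atTop atBot

/-- The risk of the rule rejecting `H₀ᵢ` when `√n |X̄ᵢ| / σ ≥ c m`. -/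
def symmRisk (σ : ℝ) (ν : Measure ℝ) (n : ℕ → ℕ) (p δ δA c : ℕ → ℝ) (m : ℕ) : ℝ :=
  fixedRisk m σ ν (n m) (p m) (δ m * δA m) (δA m)
    (-(σ * c m / Real.sqrt (n m))) (σ * c m / Real.sqrt (n m))

end
noncomputable section
namespace RatioAux
open MeasureTheory Real Set Filter


def gpdf (t : ℝ) : ℝ := (Real.sqrt (2 * Real.pi))⁻¹ * Real.exp (-(t ^ 2) / 2)

lemma gpdf_pos (t : ℝ) : 0 < gpdf t := by
  have : (0:ℝ) < Real.sqrt (2 * Real.pi) := Real.sqrt_pos.2 (by positivity)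
  exact mul_pos (inv_pos.2 this) (Real.exp_pos _)

lemma integrable_gpdf : Integrable gpdf := by
  have h : Integrable (fun t : ℝ => Real.exp (-(2⁻¹:ℝ) * t ^ 2)) :=
    integrable_exp_neg_mul_sq (by norm_num)
  have h2 := h.const_mul ((Real.sqrt (2 * Real.pi))⁻¹)
  convert h2 using 2 with t
  unfold gpdf
  ring_nf

lemma integral_gpdf : ∫ t, gpdf t = 1 := by
  unfold gpdf
  rw [MeasureTheory.integral_const_mul]
  have h : ∫ t : ℝ, Real.exp (-(2⁻¹:ℝ) * t ^ 2) = Real.sqrt (Real.pi / 2⁻¹) :=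
    integral_gaussian 2⁻¹
  have h2 : ∫ t : ℝ, Real.exp (-(t ^ 2) / 2) = Real.sqrt (2 * Real.pi) := by
    rw [show (fun t : ℝ => Real.exp (-(t ^ 2) / 2)) = fun t : ℝ => Real.exp (-(2⁻¹:ℝ) * t ^ 2) by
      funext t; ring_nf, h]
    norm_num [mul_comm]
  rw [h2, inv_mul_cancel₀ (ne_of_gt (Real.sqrt_pos.2 (by positivity)))]

lemma one_sub_Phi (x : ℝ) : 1 - Phi x = ∫ t in Ioi x, gpdf t := by
  have := intervalIntegral.integral_Iic_add_Ioi (b := x) (f := gpdf) (μ := volume)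
    integrable_gpdf.integrableOn integrable_gpdf.integrableOn
  have hPhi : Phi x = ∫ t in Iic x, gpdf t := rfl
  rw [integral_gpdf] at this
  rw [hPhi]; linarith

lemma Phi_add_Phi_neg (x : ℝ) : Phi x + Phi (-x) = 1 := by
  have h1 : Phi (-x) = ∫ t in Ioi x, gpdf t := by
    have heven : ∀ t : ℝ, gpdf (-t) = gpdf t := by intro t; unfold gpdf; rw [neg_pow]; ring_nf
    have := integral_comp_neg_Iic (-x) gpdf
    rw [neg_neg] at this
    calc Phi (-x) = ∫ t in Iic (-x), gpdf t := rfl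
      _ = ∫ t in Iic (-x), gpdf (-t) := by simp_rw [heven]
      _ = ∫ t in Ioi x, gpdf t := this
  rw [h1, ← one_sub_Phi]; ring

lemma Phi_zero : Phi 0 = 1/2 := by
  have := Phi_add_Phi_neg 0
  rw [neg_zero] at this; linarith

lemma integral_Ioi_comp_add (f : ℝ → ℝ) (c a : ℝ) :
    ∫ x in Ioi c, f (x + a) = ∫ x in Ioi (c + a), f x := by
  have A : MeasurableEmbedding (fun x : ℝ => x + a) :=
    (Homeomorph.addRight a).measurableEmbedding
  have h := A.setIntegral_map (μ := volume) f (Ioi (c + a))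
  rw [map_add_right_eq_self volume a] at h
  have hp : (fun x : ℝ => x + a) ⁻¹' Ioi (c + a) = Ioi c := by
    ext t; simp
  rw [hp] at h
  exact h.symm


variable (s : ℝ)

/-- `g c = cosh (c s) exp (-s²/2)`. -/
def g (c : ℝ) : ℝ := Real.cosh (c * s) * Real.exp (-(s ^ 2) / 2)

/-- numerator integrand -/
def h (t : ℝ) : ℝ := gpdf (t - s) + gpdf (t + s)

lemma h_eq (t : ℝ) : h s t = 2 * gpdf t * g s t := by
  unfold h g gpdf
  rw [Real.cosh_eq]
  have e1 : Real.exp (-((t - s) ^ 2) / 2)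
      = Real.exp (-(t ^ 2) / 2) * (Real.exp (-(s ^ 2) / 2) * Real.exp (t * s)) := by
    rw [← Real.exp_add, ← Real.exp_add]; ring_nf
  have e2 : Real.exp (-((t + s) ^ 2) / 2)
      = Real.exp (-(t ^ 2) / 2) * (Real.exp (-(s ^ 2) / 2) * Real.exp (-(t * s))) := by
    rw [← Real.exp_add, ← Real.exp_add]; ring_nf
  rw [e1, e2]; ring

lemma g_mono {c₁ c₂ : ℝ} (h0 : 0 ≤ c₁) (hle : c₁ ≤ c₂) : g s c₁ ≤ g s c₂ := by
  unfold g
  have : Real.cosh (c₁ * s) ≤ Real.cosh (c₂ * s) := by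
    rw [Real.cosh_le_cosh, abs_mul, abs_mul]
    exact mul_le_mul_of_nonneg_right (by rwa [abs_of_nonneg h0, abs_of_nonneg (h0.trans hle)])
      (abs_nonneg s)
  exact mul_le_mul_of_nonneg_right this (Real.exp_pos _).le

lemma g_strict (hs : s ≠ 0) {c₁ c₂ : ℝ} (h0 : 0 ≤ c₁) (hlt : c₁ < c₂) : g s c₁ < g s c₂ := by
  unfold g
  have : Real.cosh (c₁ * s) < Real.cosh (c₂ * s) := by
    rw [Real.cosh_lt_cosh, abs_mul, abs_mul]
    exact mul_lt_mul_of_pos_right (by rwa [abs_of_nonneg h0, abs_of_nonneg (h0.trans hlt.le)])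
      (abs_pos.2 hs)
  exact mul_lt_mul_of_pos_right this (Real.exp_pos _)

lemma integrable_h : Integrable (h s) := by
  exact (integrable_gpdf.comp_sub_right s).add (integrable_gpdf.comp_add_right s)

lemma num_eq (c : ℝ) : 2 - Phi (c - s) - Phi (c + s) = ∫ t in Ioi c, h s t := by
  have h1 : 1 - Phi (c - s) = ∫ t in Ioi c, gpdf (t - s) := by
    rw [one_sub_Phi]
    have := integral_Ioi_comp_add gpdf c (-s)
    simpa [sub_eq_add_neg] using this.symm
  have h2 : 1 - Phi (c + s) = ∫ t in Ioi c, gpdf (t + s) := by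
    rw [one_sub_Phi]
    exact (integral_Ioi_comp_add gpdf c s).symm
  have hint : ∫ t in Ioi c, h s t
      = (∫ t in Ioi c, gpdf (t - s)) + ∫ t in Ioi c, gpdf (t + s) :=
    integral_add (integrable_gpdf.comp_sub_right s).integrableOn
      (integrable_gpdf.comp_add_right s).integrableOn
  rw [hint, ← h1, ← h2]; ring

lemma den_eq (c : ℝ) : 2 * (1 - Phi c) = ∫ t in Ioi c, 2 * gpdf t := by
  rw [one_sub_Phi, integral_const_mul]

lemma den_pos (c : ℝ) : 0 < ∫ t in Ioi c, 2 * gpdf t := by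
  have hi : IntegrableOn (fun t => 2 * gpdf t) (Ioi c) volume :=
    (integrable_gpdf.const_mul 2).integrableOn
  rw [setIntegral_pos_iff_support_of_nonneg_ae]
  · have : Function.support (fun t => 2 * gpdf t) = univ := by
      ext t; simp [Function.mem_support, (gpdf_pos t).ne']
    rw [this, univ_inter]
    simp [Ioo_self]
  · exact Eventually.of_forall fun t => (mul_pos two_pos (gpdf_pos t)).le
  · exact hi

/-- key: `g c` is a lower bound for the tail average. -/
lemma key_ge {c : ℝ} (hc : 0 ≤ c) :
    g s c * ∫ t in Ioi c, 2 * gpdf t ≤ ∫ t in Ioi c, h s t := by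
  rw [← integral_const_mul]
  apply setIntegral_mono_on
  · exact ((integrable_gpdf.const_mul 2).const_mul _).integrableOn
  · exact (integrable_h s).integrableOn
  · exact measurableSet_Ioi
  · intro t ht
    rw [h_eq]
    have := g_mono s hc (le_of_lt ht)
    nlinarith [gpdf_pos t]

lemma key_lt (hs : s ≠ 0) {c₁ c₂ : ℝ} (h0 : 0 ≤ c₁) (hlt : c₁ < c₂) :
    ∫ t in Ioc c₁ c₂, h s t < g s c₂ * ∫ t in Ioc c₁ c₂, 2 * gpdf t := by
  rw [← integral_const_mul, ← sub_pos, ← integral_sub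
    (((integrable_gpdf.const_mul 2).const_mul _).integrableOn) (integrable_h s).integrableOn]
  rw [← intervalIntegral.integral_of_le hlt.le]
  apply intervalIntegral.intervalIntegral_pos_of_pos_on
  · exact (((integrable_gpdf.const_mul 2).const_mul _).sub (integrable_h s)).intervalIntegrable
  · intro x hx
    rw [h_eq]
    have := g_strict s hs (h0.trans hx.1.le) hx.2
    nlinarith [gpdf_pos x]
  · exact hlt


lemma split {c₁ c₂ : ℝ} (hle : c₁ ≤ c₂) (f : ℝ → ℝ) (hf : Integrable f) :
    ∫ t in Ioi c₁, f t = (∫ t in Ioc c₁ c₂, f t) + ∫ t in Ioi c₂, f t := by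
  rw [← setIntegral_union (Ioc_disjoint_Ioi le_rfl) measurableSet_Ioi hf.integrableOn
    hf.integrableOn, Ioc_union_Ioi_eq_Ioi hle]

lemma main_lt (hs : s ≠ 0) {c₁ c₂ : ℝ} (h0 : 0 ≤ c₁) (hlt : c₁ < c₂) :
    (∫ t in Ioi c₁, h s t) / (∫ t in Ioi c₁, 2 * gpdf t) <
      (∫ t in Ioi c₂, h s t) / (∫ t in Ioi c₂, 2 * gpdf t) := by
  have hN := split hlt.le (h s) (integrable_h s)
  have hD := split hlt.le (fun t => 2 * gpdf t) (integrable_gpdf.const_mul 2)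
  set N₂ := ∫ t in Ioi c₂, h s t
  set D₂ := ∫ t in Ioi c₂, 2 * gpdf t with hD₂def
  set A := ∫ t in Ioc c₁ c₂, h s t
  set B := ∫ t in Ioc c₁ c₂, 2 * gpdf t with hBdef
  have hD₂ : 0 < D₂ := den_pos c₂
  have hB : 0 ≤ B := setIntegral_nonneg measurableSet_Ioc
    (fun t _ => (mul_pos two_pos (gpdf_pos t)).le)
  have h1 : A < g s c₂ * B := key_lt s hs h0 hlt
  have h2 : g s c₂ * D₂ ≤ N₂ := key_ge s (h0.trans hlt.le)
  rw [hN, hD, div_lt_div_iff₀ (by linarith) hD₂]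
  nlinarith [mul_lt_mul_of_pos_right h1 hD₂, mul_le_mul_of_nonneg_right h2 hB]

lemma exp_abs_le_two_cosh (x : ℝ) : Real.exp |x| ≤ 2 * Real.cosh x := by
  rw [Real.cosh_eq]
  rcases abs_cases x with ⟨h1, _⟩ | ⟨h1, _⟩ <;> rw [h1] <;>
    [linarith [Real.exp_pos (-x)]; linarith [Real.exp_pos x]]


end RatioAux
end

open RatioAux in
/-- For fixed `s ≠ 0`, `f(c) = (2 - Φ(c-s) - Φ(c+s)) / (2(1 - Φ(c)))`
satisfies `f(0) = 1`, `f(c) → ∞` as `c → ∞`, and `f` is strictly increasing on `[0, ∞)`. -/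
theorem ratio_function_properties (s : ℝ) (hs : s ≠ 0) :
    (2 - Phi (0 - s) - Phi (0 + s)) / (2 * (1 - Phi 0)) = 1 ∧
      Tendsto (fun c => (2 - Phi (c - s) - Phi (c + s)) / (2 * (1 - Phi c)))
        atTop atTop ∧
      StrictMonoOn (fun c => (2 - Phi (c - s) - Phi (c + s)) / (2 * (1 - Phi c)))
        (Set.Ici (0 : ℝ)) := by
  refine ⟨?_, ?_, ?_⟩
  · have h1 := Phi_add_Phi_neg s
    rw [zero_sub, zero_add, Phi_zero, show (2:ℝ) - Phi (-s) - Phi s = 1 by linarith]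
    norm_num
  · have hlow : Tendsto (fun c : ℝ =>
        Real.exp (c * |s|) / 2 * Real.exp (-(s ^ 2) / 2)) atTop atTop := by
      apply Tendsto.atTop_mul_const (Real.exp_pos _)
      apply Tendsto.atTop_div_const two_pos
      exact Real.tendsto_exp_atTop.comp (Tendsto.atTop_mul_const (abs_pos.2 hs) tendsto_id)
    refine tendsto_atTop_mono' atTop ?_ hlow
    filter_upwards [eventually_ge_atTop (0:ℝ)] with c hc
    rw [num_eq, den_eq]
    have hle1 : Real.exp (c * |s|) / 2 * Real.exp (-(s ^ 2) / 2) ≤ g s c := by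
      unfold RatioAux.g
      have := exp_abs_le_two_cosh (c * s)
      rw [abs_mul, abs_of_nonneg hc] at this
      nlinarith [Real.exp_pos (-(s ^ 2) / 2)]
    refine hle1.trans ?_
    rw [le_div_iff₀ (den_pos c)]
    exact key_ge s hc
  · intro c₁ h1 c₂ _ hlt
    simp only []
    rw [num_eq, num_eq, den_eq, den_eq]
    exact main_lt s hs h1 hlt
end

section
/- Let ν be a probability measure on ℝ with ν({0}) < 1, let σ > 0, let n be a positive integer, and let p ∈ (0,1). Define t₁(c) = 2(1 − Φ(c)) and t₂(c) = 1 − ∫[Φ(−c − √n·μ/σ) + 1 − Φ(c − √n·μ/σ)] dν(μ), and BFDR(c) = (1−p)t₁(c) / ((1−p)t₁(c) + p(1 − t₂(c))) for c ≥ 0. Then BFDR is continuous and strictly decreasing on [0,∞), with BFDR(0) = 1 − p and BFDR(c) → 0 as c → ∞. -/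
open MeasureTheory ProbabilityTheory Filter
open scoped ENNReal Classical

/-!
With `T(c) = 2 (1 - Φ(c))` and `G(c) = 1 - t₂(c)`, we have
`BFDR(c) = (1 - p) / (1 - p + p G(c) / T(c))`, so it suffices that `G / T` is continuous,
strictly increasing on `[0, ∞)` and unbounded.

Since `φ(t - a) + φ(t + a) = 2 φ(t) e^{-a²/2} cosh (a t)`, the ratio
`(Φ(-c - a) + 1 - Φ(c - a)) / T(c)` is the mean of the likelihood ratio `e^{-a²/2} cosh (a t)`
under `φ` restricted to `t > c`. For `a ≠ 0` this likelihood ratio increases strictly on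
`[0, ∞)`, so its tail mean increases strictly in `c` and exceeds its value at `c`, which
tends to `∞`. Averaging over `ν`, the atom at `0` contributes a constant and its
complement, of positive mass, makes `G / T` strictly increasing and unbounded.
-/

open Set Real

lemma integral_lt_integral_of_le_of_lt_on {α : Type*} [MeasurableSpace α] {μ : Measure α}
    {f g : α → ℝ} {s : Set α} (hf : Integrable f μ) (hg : Integrable g μ)
    (hle : ∀ x, f x ≤ g x) (hlt : ∀ x ∈ s, f x < g x) (hs : μ s ≠ 0) :
    ∫ x, f x ∂μ < ∫ x, g x ∂μ := by
  rw [← sub_pos, ← integral_sub hg hf]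
  refine (integral_pos_iff_support_of_nonneg (fun x => sub_nonneg.2 (hle x)) (hg.sub hf)).2 ?_
  exact (pos_iff_ne_zero.2 hs).trans_le
    (measure_mono fun x hx => Function.mem_support.2 (sub_pos.2 (hlt x hx)).ne')

lemma exists_measure_annulus_ne_zero {ν : Measure ℝ} (hν : ν {0}ᶜ ≠ 0) :
    ∃ η M : ℝ, 0 < η ∧ ν {μ | η ≤ |μ| ∧ |μ| ≤ M} ≠ 0 := by
  by_contra! h
  refine hν (measure_mono_null (fun μ hμ => ?_) (measure_iUnion_null fun n : ℕ =>
    measure_iUnion_null fun m : ℕ => h (1 / (n + 1)) m (by positivity)))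
  obtain ⟨n, hn⟩ := exists_nat_one_div_lt (abs_pos.2 hμ)
  obtain ⟨m, hm⟩ := exists_nat_ge |μ|
  exact mem_iUnion₂.2 ⟨n, m, hn.le, hm⟩

lemma tendsto_cosh_atTop : Tendsto cosh atTop atTop := by
  refine tendsto_atTop_mono (fun x => ?_) (tendsto_exp_atTop.atTop_div_const two_pos)
  rw [cosh_eq]
  linarith [exp_pos (-x)]

lemma hasDerivAt_integral_Ioi {g : ℝ → ℝ} (hg : Continuous g) (hgi : Integrable g) (c : ℝ) :
    HasDerivAt (fun x => ∫ t in Ioi x, g t) (-g c) c := by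
  have hprim : HasDerivAt (fun x => ∫ t in (0 : ℝ)..x, g t) (g c) c :=
    intervalIntegral.integral_hasDerivAt_right (hg.intervalIntegrable _ _)
      hg.aestronglyMeasurable.stronglyMeasurableAtFilter hg.continuousAt
  refine (hprim.const_sub (∫ t in Ioi 0, g t)).congr_of_eventuallyEq
    (Eventually.of_forall fun x => ?_)
  have := intervalIntegral.integral_Ioi_sub_Ioi' (a := 0) (b := x) hgi.integrableOn
    hgi.integrableOn
  dsimp only
  linarith

lemma setIntegral_Ioi_pos {g : ℝ → ℝ} {c : ℝ} (hgi : IntegrableOn g (Ioi c))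
    (hg : ∀ t ∈ Ioi c, 0 < g t) : 0 < ∫ t in Ioi c, g t := by
  refine (setIntegral_pos_iff_support_of_nonneg_ae
    ((ae_restrict_iff' measurableSet_Ioi).2 (Eventually.of_forall fun t ht => (hg t ht).le))
    hgi).2 ?_
  rw [inter_eq_right.2 fun t ht => Function.mem_support.2 (hg t ht).ne', volume_Ioi]
  exact ENNReal.zero_lt_top

section TailMean

noncomputable def tailMean (w L : ℝ → ℝ) (c : ℝ) : ℝ :=
  (∫ t in Ioi c, w t * L t) / ∫ t in Ioi c, w t

variable {w L : ℝ → ℝ}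

lemma lt_tailMean {c : ℝ} (hw : ∀ t ∈ Ioi c, 0 < w t) (hwi : IntegrableOn w (Ioi c))
    (hwL : IntegrableOn (fun t => w t * L t) (Ioi c)) (hL : StrictMonoOn L (Ici c)) :
    L c < tailMean w L c := by
  have hB : 0 < ∫ t in Ioi c, w t := setIntegral_Ioi_pos hwi hw
  rw [tailMean, lt_div_iff₀ hB, ← integral_const_mul, ← sub_pos,
    ← integral_sub hwL (hwi.const_mul _)]
  refine setIntegral_Ioi_pos (hwL.sub (hwi.const_mul _)) fun t ht => ?_
  have := hL self_mem_Ici (mem_Ici.2 (le_of_lt ht)) ht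
  nlinarith [hw t ht]

lemma tailMean_strictMonoOn {a : ℝ} (hw : Continuous w) (hw0 : ∀ t, 0 < w t)
    (hwi : Integrable w) (hL : Continuous L) (hwL : Integrable fun t => w t * L t)
    (hmono : StrictMonoOn L (Ici a)) : StrictMonoOn (tailMean w L) (Ici a) := by
  have hB : ∀ c, 0 < ∫ t in Ioi c, w t := fun c => setIntegral_Ioi_pos hwi.integrableOn
    fun t _ => hw0 t
  have hderiv : ∀ c, HasDerivAt (tailMean w L)
      ((-(w c * L c) * (∫ t in Ioi c, w t) - (∫ t in Ioi c, w t * L t) * -w c) /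
        (∫ t in Ioi c, w t) ^ 2) c := fun c =>
    (hasDerivAt_integral_Ioi (hw.mul hL) hwL c).div (hasDerivAt_integral_Ioi hw hwi c)
      (hB c).ne'
  refine strictMonoOn_of_deriv_pos (convex_Ici a)
    (fun c _ => (hderiv c).continuousAt.continuousWithinAt) fun c hc => ?_
  rw [interior_Ici] at hc
  have hLc : L c * ∫ t in Ioi c, w t < ∫ t in Ioi c, w t * L t :=
    (lt_div_iff₀ (hB c)).1 <| lt_tailMean (fun t _ => hw0 t) hwi.integrableOn hwL.integrableOn
      (hmono.mono (Ici_subset_Ici.2 (le_of_lt hc)))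
  rw [(hderiv c).deriv]
  refine div_pos ?_ (pow_pos (hB c) 2)
  nlinarith [hw0 c]

end TailMean

section Gaussian

local notation "φ" => gaussianPDFReal 0 1

lemma continuous_gaussianPDFReal (μ : ℝ) (v : NNReal) : Continuous (gaussianPDFReal μ v) := by
  rw [gaussianPDFReal_def]
  fun_prop

lemma Phi_eq_integral (x : ℝ) : Phi x = ∫ t in Iic x, φ t := by
  simp [Phi, gaussianPDFReal]

lemma one_sub_Phi (x : ℝ) : 1 - Phi x = ∫ t in Ioi x, φ t := by
  have := intervalIntegral.integral_Iic_add_Ioi (b := x)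
    (integrable_gaussianPDFReal 0 1).integrableOn (integrable_gaussianPDFReal 0 1).integrableOn
  rw [integral_gaussianPDFReal_eq_one 0 one_ne_zero, ← Phi_eq_integral] at this
  linarith

lemma Phi_neg (x : ℝ) : Phi (-x) = 1 - Phi x := by
  rw [one_sub_Phi, Phi_eq_integral, ← neg_neg x, ← integral_comp_neg_Iic, neg_neg]
  simp [gaussianPDFReal]

lemma Phi_nonneg (x : ℝ) : 0 ≤ Phi x := by
  rw [Phi_eq_integral]
  exact setIntegral_nonneg measurableSet_Iic fun t _ => gaussianPDFReal_nonneg 0 1 t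

lemma Phi_lt_one (x : ℝ) : Phi x < 1 := by
  have := setIntegral_Ioi_pos (c := x) (integrable_gaussianPDFReal 0 1).integrableOn
    fun t _ => gaussianPDFReal_pos 0 1 t one_ne_zero
  linarith [one_sub_Phi x]

@[fun_prop]
lemma continuous_Phi : Continuous Phi := by
  have h : Phi = fun x => 1 - ∫ t in Ioi x, φ t := funext fun x => by rw [← one_sub_Phi]; ring
  rw [h, continuous_iff_continuousAt]
  exact fun x => ((hasDerivAt_integral_Ioi (continuous_gaussianPDFReal 0 1)
    (integrable_gaussianPDFReal 0 1) x).continuousAt).const_sub 1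

lemma one_sub_Phi_sub (a c : ℝ) : 1 - Phi (c - a) = ∫ t in Ioi c, φ (t - a) := by
  have := (measurePreserving_sub_right volume a).setIntegral_preimage_emb
    (measurableEmbedding_subRight a) φ (Ioi (c - a))
  rwa [preimage_sub_const_Ioi, sub_add_cancel, ← one_sub_Phi, eq_comm] at this

/-- Likelihood ratio of `(N(a, 1) + N(-a, 1)) / 2` against `N(0, 1)`. -/
noncomputable def symmLR (a t : ℝ) : ℝ := exp (-a ^ 2 / 2) * cosh (a * t)

lemma continuous_symmLR (a : ℝ) : Continuous (symmLR a) := by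
  unfold symmLR
  fun_prop

lemma strictMonoOn_symmLR {a : ℝ} (ha : a ≠ 0) : StrictMonoOn (symmLR a) (Ici 0) := by
  intro s hs t ht hst
  rw [mem_Ici] at hs ht
  refine mul_lt_mul_of_pos_left (cosh_lt_cosh.2 ?_) (exp_pos _)
  rw [abs_mul, abs_mul, abs_of_nonneg hs, abs_of_nonneg ht]
  exact mul_lt_mul_of_pos_left hst (abs_pos.2 ha)

lemma gaussianPDFReal_sub_add_add (a t : ℝ) :
    φ (t - a) + φ (t + a) = 2 * (φ t * symmLR a t) := by
  simp only [gaussianPDFReal, symmLR, cosh_eq, NNReal.coe_one, sub_zero, mul_one]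
  rw [show -(t - a) ^ 2 / 2 = -t ^ 2 / 2 + (-a ^ 2 / 2 + a * t) by ring,
    show -(t + a) ^ 2 / 2 = -t ^ 2 / 2 + (-a ^ 2 / 2 + -(a * t)) by ring]
  simp only [exp_add]
  ring

lemma integrable_gaussianPDFReal_mul_symmLR (a : ℝ) :
    Integrable fun t => φ t * symmLR a t := by
  have h := ((integrable_gaussianPDFReal 0 1).comp_sub_right a).add
    ((integrable_gaussianPDFReal 0 1).comp_add_right a)
  refine (h.div_const 2).congr (Eventually.of_forall fun t => ?_)
  simp only [Pi.add_apply, gaussianPDFReal_sub_add_add]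
  ring

/-- `P(|Z + a| > c)` for `Z` standard normal. -/
noncomputable def symmPower (a c : ℝ) : ℝ := Phi (-c - a) + 1 - Phi (c - a)

lemma symmPower_eq_integral (a c : ℝ) :
    symmPower a c = 2 * ∫ t in Ioi c, φ t * symmLR a t := by
  have hplus : Phi (-c - a) = ∫ t in Ioi c, φ (t + a) := by
    rw [show -c - a = -(c - -a) by ring, Phi_neg, one_sub_Phi_sub]
    simp only [sub_neg_eq_add]
  rw [symmPower, add_sub_assoc, one_sub_Phi_sub, hplus, ← integral_add, ← integral_const_mul]
  · congr 1 with t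
    rw [add_comm, gaussianPDFReal_sub_add_add]
  · exact ((integrable_gaussianPDFReal 0 1).comp_add_right a).integrableOn
  · exact ((integrable_gaussianPDFReal 0 1).comp_sub_right a).integrableOn

lemma symmLR_zero_left (t : ℝ) : symmLR 0 t = 1 := by
  simp [symmLR]

lemma symmLR_pos (a t : ℝ) : 0 < symmLR a t :=
  mul_pos (exp_pos _) (cosh_pos _)

lemma symmPower_pos (a c : ℝ) : 0 < symmPower a c := by
  rw [symmPower_eq_integral]
  exact mul_pos two_pos <| setIntegral_Ioi_pos
    (integrable_gaussianPDFReal_mul_symmLR a).integrableOn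
    fun t _ => mul_pos (gaussianPDFReal_pos 0 1 t one_ne_zero) (symmLR_pos a t)

lemma norm_symmPower_le (a c : ℝ) : ‖symmPower a c‖ ≤ 2 := by
  rw [Real.norm_of_nonneg (symmPower_pos a c).le, symmPower]
  linarith [Phi_lt_one (-c - a), Phi_nonneg (c - a)]

@[fun_prop]
lemma Continuous.symmPower {X : Type*} [TopologicalSpace X] {f g : X → ℝ} (hf : Continuous f)
    (hg : Continuous g) : Continuous fun x => symmPower (f x) (g x) := by
  unfold _root_.symmPower
  fun_prop

lemma symmPower_zero_left (c : ℝ) : symmPower 0 c = 2 * (1 - Phi c) := by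
  rw [symmPower, sub_zero, sub_zero, Phi_neg]
  ring

lemma symmPower_zero_right (a : ℝ) : symmPower a 0 = 1 := by
  simp [symmPower]

lemma symmPower_div_symmPower_zero (a c : ℝ) :
    symmPower a c / symmPower 0 c = tailMean φ (symmLR a) c := by
  simp only [symmPower_eq_integral, symmLR_zero_left, mul_one, tailMean]
  exact mul_div_mul_left _ _ two_ne_zero

lemma strictMonoOn_symmPower_div {a : ℝ} (ha : a ≠ 0) :
    StrictMonoOn (fun c => symmPower a c / symmPower 0 c) (Ici 0) := by
  simp only [symmPower_div_symmPower_zero]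
  exact tailMean_strictMonoOn (continuous_gaussianPDFReal 0 1)
    (fun t => gaussianPDFReal_pos 0 1 t one_ne_zero) (integrable_gaussianPDFReal 0 1)
    (continuous_symmLR a) (integrable_gaussianPDFReal_mul_symmLR a) (strictMonoOn_symmLR ha)

lemma symmLR_lt_symmPower_div {a c : ℝ} (ha : a ≠ 0) (hc : 0 ≤ c) :
    symmLR a c < symmPower a c / symmPower 0 c := by
  rw [symmPower_div_symmPower_zero]
  exact lt_tailMean (fun t _ => gaussianPDFReal_pos 0 1 t one_ne_zero)
    (integrable_gaussianPDFReal 0 1).integrableOn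
    (integrable_gaussianPDFReal_mul_symmLR a).integrableOn
    ((strictMonoOn_symmLR ha).mono (Ici_subset_Ici.2 hc))

lemma exp_mul_cosh_le_symmPower_div {a c η M : ℝ} (hc : 0 ≤ c) (hη : 0 < η)
    (hηa : η ≤ |a|) (haM : |a| ≤ M) :
    exp (-M ^ 2 / 2) * cosh (η * c) ≤ symmPower a c / symmPower 0 c := by
  have hsq : a ^ 2 ≤ M ^ 2 := sq_abs a ▸ pow_le_pow_left₀ (abs_nonneg a) haM 2
  have hcosh : cosh (η * c) ≤ cosh (a * c) := by
    rw [cosh_le_cosh, abs_mul, abs_mul, abs_of_pos hη, abs_of_nonneg hc]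
    exact mul_le_mul_of_nonneg_right hηa hc
  refine le_trans ?_ (symmLR_lt_symmPower_div (abs_pos.1 (hη.trans_le hηa)) hc).le
  exact mul_le_mul (exp_le_exp.2 (by linarith)) hcosh (cosh_pos _).le (exp_pos _).le

end Gaussian

/-- `(1 - t₂(c)) / t₁(c)` when the effect `μ` enters the test statistic as `k μ`. -/
noncomputable def powerSizeRatio (ν : Measure ℝ) (k c : ℝ) : ℝ :=
  (∫ μ, symmPower (k * μ) c ∂ν) / symmPower 0 c

section Mixture

variable {ν : Measure ℝ}

lemma powerSizeRatio_eq_integral (k c : ℝ) :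
    powerSizeRatio ν k c = ∫ μ, symmPower (k * μ) c / symmPower 0 c ∂ν :=
  (integral_div _ _).symm

lemma powerSizeRatio_nonneg (k c : ℝ) : 0 ≤ powerSizeRatio ν k c :=
  div_nonneg (integral_nonneg fun _ => (symmPower_pos _ _).le) (symmPower_pos 0 c).le

lemma powerSizeRatio_zero [IsProbabilityMeasure ν] (k : ℝ) : powerSizeRatio ν k 0 = 1 := by
  simp [powerSizeRatio, symmPower_zero_right]

variable [IsFiniteMeasure ν]

lemma integrable_symmPower_mul (k c : ℝ) : Integrable (fun μ => symmPower (k * μ) c) ν :=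
  Integrable.mono' (integrable_const 2) (by fun_prop : Continuous _).aestronglyMeasurable
    (ae_of_all _ fun _ => norm_symmPower_le _ _)

@[fun_prop]
lemma continuous_powerSizeRatio (k : ℝ) : Continuous (powerSizeRatio ν k) := by
  refine Continuous.div ?_ (by fun_prop) fun c => (symmPower_pos 0 c).ne'
  exact continuous_of_dominated (fun c => (by fun_prop : Continuous _).aestronglyMeasurable)
    (fun c => ae_of_all _ fun _ => norm_symmPower_le _ _) (integrable_const 2)
    (ae_of_all _ fun _ => by fun_prop)

lemma strictMonoOn_powerSizeRatio {k : ℝ} (hk : k ≠ 0) (hν : ν {0}ᶜ ≠ 0) :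
    StrictMonoOn (powerSizeRatio ν k) (Ici 0) := by
  intro c₁ h₁ c₂ h₂ h12
  have hmono : ∀ μ, μ ≠ 0 →
      symmPower (k * μ) c₁ / symmPower 0 c₁ < symmPower (k * μ) c₂ / symmPower 0 c₂ :=
    fun μ hμ => strictMonoOn_symmPower_div (mul_ne_zero hk hμ) h₁ h₂ h12
  simp only [powerSizeRatio_eq_integral]
  refine integral_lt_integral_of_le_of_lt_on ((integrable_symmPower_mul k c₁).div_const _)
    ((integrable_symmPower_mul k c₂).div_const _) (fun μ => ?_) hmono hν
  rcases eq_or_ne μ 0 with rfl | hμ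
  · simp [div_self (symmPower_pos 0 _).ne']
  · exact (hmono μ hμ).le

lemma tendsto_powerSizeRatio_atTop {k : ℝ} (hk : k ≠ 0) (hν : ν {0}ᶜ ≠ 0) :
    Tendsto (powerSizeRatio ν k) atTop atTop := by
  obtain ⟨η, M, hη, hE⟩ := exists_measure_annulus_ne_zero hν
  set E := {μ : ℝ | η ≤ |μ| ∧ |μ| ≤ M}
  have hEm : MeasurableSet E :=
    (measurableSet_le measurable_const measurable_abs).inter
      (measurableSet_le measurable_abs measurable_const)
  set b := fun c => exp (-(|k| * M) ^ 2 / 2) * cosh (|k| * η * c)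
  have hb : Tendsto b atTop atTop :=
    (tendsto_cosh_atTop.comp (tendsto_id.const_mul_atTop (by positivity))).const_mul_atTop
      (exp_pos _)
  refine tendsto_atTop_mono' atTop ?_
    (hb.const_mul_atTop (ENNReal.toReal_pos hE (measure_ne_top ν E)))
  filter_upwards [eventually_ge_atTop 0] with c hc
  have hbound : ∀ μ, E.indicator (fun _ => b c) μ ≤ symmPower (k * μ) c / symmPower 0 c := by
    intro μ
    by_cases hμ : μ ∈ E
    · rw [indicator_of_mem hμ]
      refine exp_mul_cosh_le_symmPower_div hc (by positivity) ?_ ?_ <;> rw [abs_mul]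
      exacts [mul_le_mul_of_nonneg_left hμ.1 (abs_nonneg k),
        mul_le_mul_of_nonneg_left hμ.2 (abs_nonneg k)]
    · rw [indicator_of_notMem hμ]
      exact div_nonneg (symmPower_pos _ _).le (symmPower_pos _ _).le
  calc (ν E).toReal * b c = ∫ μ, E.indicator (fun _ => b c) μ ∂ν := by
        rw [integral_indicator_const _ hEm, smul_eq_mul, measureReal_def]
    _ ≤ powerSizeRatio ν k c := by
        rw [powerSizeRatio_eq_integral]
        exact integral_mono ((integrable_const _).indicator hEm)
          ((integrable_symmPower_mul k c).div_const _) hbound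

end Mixture

/-- For a probability measure `ν` with `ν({0}) < 1`, `σ > 0`, `n ≥ 1` and
`p ∈ (0,1)`, the function `BFDR(c) = (1-p)t₁(c)/((1-p)t₁(c) + p(1 - t₂(c)))` is
continuous and strictly decreasing on `[0, ∞)`, with `BFDR(0) = 1 - p` and
`BFDR(c) → 0` as `c → ∞`. -/
theorem BFDR_strictly_decreasing
    (ν : Measure ℝ) [IsProbabilityMeasure ν] (hν : ν {0} < 1)
    (σ : ℝ) (hσ : 0 < σ) (n : ℕ) (hn : 0 < n) (p : ℝ) (hp : p ∈ Set.Ioo (0 : ℝ) 1) :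
    ContinuousOn (fun c : ℝ =>
        (1 - p) * (2 * (1 - Phi c)) /
          ((1 - p) * (2 * (1 - Phi c)) +
            p * (1 - (1 - ∫ μ, (Phi (-c - Real.sqrt n * μ / σ) + 1 -
              Phi (c - Real.sqrt n * μ / σ)) ∂ν))))
        (Set.Ici (0 : ℝ)) ∧
      StrictAntiOn (fun c : ℝ =>
        (1 - p) * (2 * (1 - Phi c)) /
          ((1 - p) * (2 * (1 - Phi c)) +
            p * (1 - (1 - ∫ μ, (Phi (-c - Real.sqrt n * μ / σ) + 1 -
              Phi (c - Real.sqrt n * μ / σ)) ∂ν))))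
        (Set.Ici (0 : ℝ)) ∧
      (1 - p) * (2 * (1 - Phi 0)) /
          ((1 - p) * (2 * (1 - Phi 0)) +
            p * (1 - (1 - ∫ μ, (Phi (-(0:ℝ) - Real.sqrt n * μ / σ) + 1 -
              Phi ((0:ℝ) - Real.sqrt n * μ / σ)) ∂ν))) = 1 - p ∧
      Tendsto (fun c : ℝ =>
        (1 - p) * (2 * (1 - Phi c)) /
          ((1 - p) * (2 * (1 - Phi c)) +
            p * (1 - (1 - ∫ μ, (Phi (-c - Real.sqrt n * μ / σ) + 1 -
              Phi (c - Real.sqrt n * μ / σ)) ∂ν))))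
        atTop (nhds 0) := by
  obtain ⟨hp0, hp1⟩ := hp
  have hq : 0 < 1 - p := sub_pos.2 hp1
  have hk : √n / σ ≠ 0 := (div_pos (Real.sqrt_pos.2 (Nat.cast_pos.2 hn)) hσ).ne'
  have hν' : ν {0}ᶜ ≠ 0 := by
    rw [prob_compl_eq_one_sub (measurableSet_singleton 0)]
    exact (tsub_pos_iff_lt.2 hν).ne'
  have hden : ∀ c, 0 < 1 - p + p * powerSizeRatio ν (√n / σ) c := fun c =>
    add_pos_of_pos_of_nonneg hq (mul_nonneg hp0.le (powerSizeRatio_nonneg _ c))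
  have hBFDR : ∀ c : ℝ, (1 - p) * (2 * (1 - Phi c)) / ((1 - p) * (2 * (1 - Phi c)) +
      p * (1 - (1 - ∫ μ, (Phi (-c - √n * μ / σ) + 1 - Phi (c - √n * μ / σ)) ∂ν))) =
      (1 - p) / (1 - p + p * powerSizeRatio ν (√n / σ) c) := fun c => by
    have hint : ∫ μ, (Phi (-c - √n * μ / σ) + 1 - Phi (c - √n * μ / σ)) ∂ν =
        ∫ μ, symmPower (√n / σ * μ) c ∂ν := by
      simp only [symmPower, mul_div_right_comm]
    have hsize := symmPower_pos 0 c
    rw [sub_sub_cancel, hint, ← symmPower_zero_left, powerSizeRatio]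
    field_simp
  simp only [hBFDR]
  refine ⟨?_, fun c₁ h₁ c₂ h₂ h12 => ?_, by rw [powerSizeRatio_zero]; ring, ?_⟩
  · exact (continuous_const.div (by fun_prop) fun c => (hden c).ne').continuousOn
  · exact div_lt_div_of_pos_left hq (hden c₁)
      (by gcongr; exact strictMonoOn_powerSizeRatio hk hν' h₁ h₂ h12)
  · exact tendsto_const_nhds.div_atTop <| tendsto_atTop_add_const_left _ _ <|
      (tendsto_powerSizeRatio_atTop hk hν').const_mul_atTop hp0
end
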